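/- arXiv:2006.05099 — 4 statements merged into one kernel-verified Lean document; each statement's English description precedes it below -/
import Mathlib

section
/- (Generalised Birkhoff–Stone prime filter theorem.) Let S be a set, let ⊢ be a strong idempotent on 𝖥S, let R ⊆ S be round, and let Q ⊆ S. If there are no finite F ⊆ R and finite G ⊆ Q with F ⊢ G, then there exists a tight subset T ⊆ S with R ⊆ T and T ∩ Q = ∅. -/
open scoped Classical

/-! Common definitions: entailment/cover relations on finite subsets,
tight subsets, the tight spectrum, quasi-ideals, and topological notions. -/

/-- `H` is a *selection* of the finite family `𝒢`: it meets every member of `𝒢`. -/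
def IsSelection {S : Type*} (𝒢 : Finset (Finset S)) (H : Finset S) : Prop :=
  ∀ I ∈ 𝒢, ∃ x ∈ I, x ∈ H

/-- Cut-composition `r • s` of relations. -/
def CutComp {A B C : Type*} (r : Finset A → Finset B → Prop)
    (s : Finset B → Finset C → Prop) (F : Finset A) (G : Finset C) : Prop :=
  ∃ ℱ 𝒢 : Finset (Finset B),
    (∀ H ∈ ℱ, r F H) ∧
    (∀ K : Finset B, IsSelection ℱ K → ∃ I ∈ 𝒢, I ⊆ K) ∧
    (∀ I ∈ 𝒢, s I G)

/-- Upper relation: `F ⊢ G ⊆ H` implies `F ⊢ H`. -/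
def IsUpperRel {A B : Type*} (r : Finset A → Finset B → Prop) : Prop :=
  ∀ F G H, r F G → G ⊆ H → r F H

/-- Lower relation: `F ⊢ G` and `F ⊆ E` imply `E ⊢ G`. -/
def IsLowerRel {A B : Type*} (r : Finset A → Finset B → Prop) : Prop :=
  ∀ F G E, r F G → F ⊆ E → r E G

/-- `F ⊢_{1∃} G` iff `F ⊢ {g}` for some `g ∈ G`. -/
def OneExists {A B : Type*} (r : Finset A → Finset B → Prop)
    (F : Finset A) (G : Finset B) : Prop :=
  ∃ g ∈ G, r F {g}

/-- Cut-transitivity: `⊢ • ⊢ ⊆ ⊢`. -/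
def CutTransitive {S : Type*} (r : Finset S → Finset S → Prop) : Prop :=
  ∀ F G, CutComp r r F G → r F G

/-- Divisibility: `⊢ ⊆ ⊢ • ⊢_{1∃}`. -/
def Divisible {S : Type*} (r : Finset S → Finset S → Prop) : Prop :=
  ∀ F G, r F G → CutComp r (OneExists r) F G

/-- A strong idempotent: monotone, cut-transitive and divisible. -/
def StrongIdempotent {S : Type*} (r : Finset S → Finset S → Prop) : Prop :=
  IsUpperRel r ∧ IsLowerRel r ∧ CutTransitive r ∧ Divisible r

/-- Gentzen's cut rule. -/
def CutRel {S : Type*} (r : Finset S → Finset S → Prop) : Prop :=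
  ∀ (s : S) (F G : Finset S), r (insert s F) G → r F (insert s G) → r F G

/-- An entailment: a monotone cut relation. -/
def Entailment {S : Type*} (r : Finset S → Finset S → Prop) : Prop :=
  IsUpperRel r ∧ IsLowerRel r ∧ CutRel r

/-- 1-reflexivity: `{s} ⊢ {s}` for all `s`. -/
def OneReflexive {S : Type*} (r : Finset S → Finset S → Prop) : Prop :=
  ∀ s : S, r {s} {s}

/-- The relation `⊩` induced by `⊢`:
`F ⊩ G` iff every `H` with `H ⊢ {f}` for all `f ∈ F` satisfies `H ⊢ G`. -/
def Vdash {S : Type*} (r : Finset S → Finset S → Prop)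
    (F G : Finset S) : Prop :=
  ∀ H : Finset S, (∀ f ∈ F, r H {f}) → r H G

/-- `⊢` is auxiliary to `⊨`. -/
def AuxiliaryTo {S T : Type*} (r : Finset S → Finset T → Prop)
    (v : Finset S → Finset S → Prop) : Prop :=
  ∀ (F H : Finset S) (G : Finset T), (∀ h ∈ H, r (insert h F) G) → v F H → r F G

/-- `⊢` is dual-auxiliary to `⊨`. -/
def DualAuxiliaryTo {S : Type*} (r v : Finset S → Finset S → Prop) : Prop :=
  ∀ F G H : Finset S, r H G → (∀ h ∈ H, v F (insert h G)) → r F G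

/-- A semicut relation: self-dual-auxiliary. -/
def Semicut {S : Type*} (r : Finset S → Finset S → Prop) : Prop :=
  DualAuxiliaryTo r r

/-- A cover relation: a strong idempotent auxiliary to `⊩`. -/
def CoverRelation {S : Type*} (r : Finset S → Finset S → Prop) : Prop :=
  StrongIdempotent r ∧ AuxiliaryTo r (Vdash r)

/-- Tight subset. -/
def TightSet {S : Type*} (r : Finset S → Finset S → Prop) (T : Set S) : Prop :=
  ∀ G : Finset S, (∃ F : Finset S, ↑F ⊆ T ∧ r F G) ↔ ∃ g ∈ G, g ∈ T

/-- Round subset. -/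
def RoundSet {S : Type*} (r : Finset S → Finset S → Prop) (R : Set S) : Prop :=
  ∀ x ∈ R, ∃ F : Finset S, ↑F ⊆ R ∧ r F {x}

/-- Prime subset. -/
def PrimeSet {S : Type*} (r : Finset S → Finset S → Prop) (P : Set S) : Prop :=
  ∀ F G : Finset S, ↑F ⊆ P → r F G → ∃ g ∈ G, g ∈ P

/-- The tight spectrum: nonempty tight subsets. -/
def TightSpec {S : Type*} (r : Finset S → Finset S → Prop) : Type _ :=
  {T : Set S // TightSet r T ∧ T.Nonempty}

/-- The underlying set of points of an element of the tight spectrum. -/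
def TightSpec.pts {S : Type*} {r : Finset S → Finset S → Prop} (T : TightSpec r) : Set S :=
  Subtype.val T

/-- The spectrum topology, generated by the subbasic sets `𝖳_p = {T | p ∈ T}`. -/
instance TightSpec.instTopologicalSpace {S : Type*} (r : Finset S → Finset S → Prop) :
    TopologicalSpace (TightSpec r) :=
  TopologicalSpace.generateFrom (Set.range fun p : S => {T : TightSpec r | p ∈ T.pts})

/-- `𝖳_F = {T ∈ 𝖳^S : F ⊆ T}`. -/
def TightSpec.TF {S : Type*} (r : Finset S → Finset S → Prop) (F : Finset S) :
    Set (TightSpec r) :=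
  {T : TightSpec r | ↑F ⊆ T.pts}

/-- `𝖳^G = {T ∈ 𝖳^S : T ∩ G ≠ ∅}`. -/
def TightSpec.TG {S : Type*} (r : Finset S → Finset S → Prop) (G : Finset S) :
    Set (TightSpec r) :=
  {T : TightSpec r | ∃ g ∈ G, g ∈ T.pts}

/-- `p ⋐ q`: every open cover of `q` has a finite subcover of `p`. -/
def CompactlyContained {X : Type*} [TopologicalSpace X] (p q : Set X) : Prop :=
  ∀ 𝒰 : Set (Set X), (∀ u ∈ 𝒰, IsOpen u) → q ⊆ ⋃₀ 𝒰 →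
    ∃ 𝒱 : Finset (Set X), ↑𝒱 ⊆ 𝒰 ∧ p ⊆ ⋃₀ ↑𝒱

/-- Core compactness. -/
def CoreCompact (X : Type*) [TopologicalSpace X] : Prop :=
  ∀ p : Set X, IsOpen p → ∀ x ∈ p, ∃ q : Set X, IsOpen q ∧ x ∈ q ∧ CompactlyContained q p

/-- Core coherence. -/
def CoreCoherent (X : Type*) [TopologicalSpace X] : Prop :=
  ∀ p q s : Set X, IsOpen p → IsOpen q → IsOpen s →
    CompactlyContained p q → CompactlyContained p s → CompactlyContained p (q ∩ s)

/-- Sobriety: each irreducible closed set is the closure of a unique point. -/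
def SoberSpace (X : Type*) [TopologicalSpace X] : Prop :=
  ∀ C : Set X, IsIrreducible C → IsClosed C → ∃! x : X, C = closure {x}

/-- Stably locally compact: core compact, core coherent and sober. -/
def StablyLocallyCompact (X : Type*) [TopologicalSpace X] : Prop :=
  CoreCompact X ∧ CoreCoherent X ∧ SoberSpace X

/-- The specialisation preorder: `x → y` iff every open set containing `y` contains `x`. -/
def SpecTo {X : Type*} [TopologicalSpace X] (x y : X) : Prop :=
  ∀ U : Set X, IsOpen U → y ∈ U → x ∈ U

/-- Saturation of a subset. -/
def satOf {X : Type*} [TopologicalSpace X] (D : Set X) : Set X :=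
  {x | ∃ y ∈ D, SpecTo x y}

/-- Saturated subsets. -/
def IsSaturatedSet {X : Type*} [TopologicalSpace X] (K : Set X) : Prop :=
  K = satOf K

/-- The patch topology: generated by open sets together with complements of
compact saturated sets. -/
def patchTopology (X : Type*) [TopologicalSpace X] : TopologicalSpace X :=
  TopologicalSpace.generateFrom
    ({U : Set X | IsOpen U} ∪ {V : Set X | ∃ K : Set X, IsCompact K ∧ IsSaturatedSet K ∧ V = Kᶜ})

/-- Very dense subset: the whole space is both its saturation and its patch-closure. -/
def VeryDense {X : Type*} [TopologicalSpace X] (D : Set X) : Prop :=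
  satOf D = Set.univ ∧ @Dense X (patchTopology X) D

/-- A subbasis: a covering family of open sets generating the topology. -/
def IsSubbasis {X : Type*} [t : TopologicalSpace X] (S : Set (Set X)) : Prop :=
  (∀ p ∈ S, IsOpen p) ∧ ⋃₀ S = Set.univ ∧ TopologicalSpace.generateFrom S = t

/-- The compact cover relation `⊢_⋐` on the finite subsets of a family `S` of
subsets of a space `X`: `F ⊢ G` iff `⋂F ⋐ ⋃G`. -/
def subCover {X : Type*} [TopologicalSpace X] (S : Set (Set X)) :
    Finset ↥S → Finset ↥S → Prop := fun F G =>
  CompactlyContained (⋂ p ∈ F, (p : Set X)) (⋃ p ∈ G, (p : Set X))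

/-- `∩`-roundness of a family of open sets. -/
def CapRound {X : Type*} [TopologicalSpace X] (S : Set (Set X)) : Prop :=
  ∀ p ∈ S, ∀ x ∈ p, ∃ F : Finset ↥S,
    x ∈ (⋂ q ∈ F, (q : Set X)) ∧ CompactlyContained (⋂ q ∈ F, (q : Set X)) p

/-- A pseudosubbasis: a `∩`-round, `T0`-separating family of open sets. -/
def IsPseudoSubbasis {X : Type*} [TopologicalSpace X] (S : Set (Set X)) : Prop :=
  (∀ p ∈ S, IsOpen p) ∧ CapRound S ∧
    ∀ x y : X, x ≠ y → ∃ p ∈ S, (x ∈ p ∧ y ∉ p) ∨ (y ∈ p ∧ x ∉ p)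

/-- A proximal map: continuous and preserving compact containment under preimages. -/
def Proximal {Y X : Type*} [TopologicalSpace Y] [TopologicalSpace X] (φ : Y → X) : Prop :=
  Continuous φ ∧ ∀ O N : Set X, IsOpen O → IsOpen N →
    CompactlyContained O N → CompactlyContained (φ ⁻¹' O) (φ ⁻¹' N)

/-- `𝒬↓`: the finite sets `F` with `F ⊢ 𝒢_⋔` for some finite `𝒢 ⊆ 𝒬`. -/
def downSet {S : Type*} (r : Finset S → Finset S → Prop) (Q : Set (Finset S)) :
    Set (Finset S) :=
  {F | ∃ 𝒢 : Finset (Finset S), ↑𝒢 ⊆ Q ∧ ∀ H : Finset S, IsSelection 𝒢 H → r F H}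

/-- Quasi-ideal: `𝒬 = 𝒬↓`. -/
def QuasiIdeal {S : Type*} (r : Finset S → Finset S → Prop) (Q : Set (Finset S)) : Prop :=
  downSet r Q = Q

/-- `G^⊣ = {F : F ⊢ G}`. -/
def polar {S : Type*} (r : Finset S → Finset S → Prop) (G : Finset S) : Set (Finset S) :=
  {F | r F G}

/-- The way-below relation in the complete lattice of quasi-ideals (where the join
of a family `𝒟` is `(⋃₀𝒟)↓`): `Q ≪ R` iff every nonempty directed family of
quasi-ideals whose join contains `R` has a member containing `Q`. -/
def WayBelowQI {S : Type*} (r : Finset S → Finset S → Prop)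
    (Q R : Set (Finset S)) : Prop :=
  ∀ 𝒟 : Set (Set (Finset S)), (∀ P ∈ 𝒟, QuasiIdeal r P) → 𝒟.Nonempty →
    DirectedOn (· ⊆ ·) 𝒟 → R ⊆ downSet r (⋃₀ 𝒟) → ∃ P ∈ 𝒟, Q ⊆ P

/-! Zorn gives a quasi-ideal `𝒬`, maximal among those containing no finite subset of `R`, that
contains every `F` with `F ⊢ {q}` for some `q ∈ Q`. Maximality makes `𝒬` prime in the distributive
lattice of quasi-ideals: for finitely many points `s` whose polars `s^⊣ = {F | F ⊢ {s}}` are not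
contained in `𝒬`, the intersection of their polars is not contained in `𝒬` either. Divisibility
then shows that `T = {s | s^⊣ ⊄ 𝒬}` is prime, and maximality of `𝒬` against the quasi-ideal
generated by `𝒬` and `s^⊣` shows that `T` is round; prime round sets are tight. -/

section DownSet

variable {S : Type*} {r : Finset S → Finset S → Prop}

lemma isSelection_biUnion_sdiff {𝒢 : Finset (Finset S)} {K : Finset S}
    (h : ∀ I ∈ 𝒢, ¬ I ⊆ K) : IsSelection 𝒢 (𝒢.biUnion (· \ K)) := by
  intro I hI
  obtain ⟨x, hxI, hxK⟩ := Finset.not_subset.1 (h I hI)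
  exact ⟨x, hxI, Finset.mem_biUnion.2 ⟨I, hI, Finset.mem_sdiff.2 ⟨hxI, hxK⟩⟩⟩

lemma downSet_mono {X Y : Set (Finset S)} (h : X ⊆ Y) : downSet r X ⊆ downSet r Y := by
  rintro F ⟨𝒢, h𝒢, hF⟩
  exact ⟨𝒢, h𝒢.trans h, hF⟩

lemma isUpperSet_downSet (hl : IsLowerRel r) (X : Set (Finset S)) :
    IsUpperSet (downSet r X) := by
  rintro F E hFE ⟨𝒢, h𝒢, hF⟩
  exact ⟨𝒢, h𝒢, fun H hH => hl F H E (hF H hH) hFE⟩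

lemma CutTransitive.of_mem_downSet_polar (hc : CutTransitive r) {F G : Finset S}
    (hF : F ∈ downSet r (polar r G)) : r F G := by
  obtain ⟨𝒢, h𝒢, hF⟩ := hF
  refine hc F G ⟨(𝒢.sup id).powerset.filter (IsSelection 𝒢), 𝒢,
    fun H hH => hF H (Finset.mem_filter.1 hH).2, fun K hK => ?_, fun I hI => h𝒢 hI⟩
  by_contra! hK𝒢
  -- the points of `⋃ 𝒢` outside `K` form a selection of `𝒢` that `K` fails to meet
  have hsel := isSelection_biUnion_sdiff hK𝒢
  have hmem : 𝒢.biUnion (· \ K) ∈ (𝒢.sup id).powerset.filter (IsSelection 𝒢) := by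
    refine Finset.mem_filter.2 ⟨Finset.mem_powerset.2 fun x hx => ?_, hsel⟩
    obtain ⟨I, hI, hx⟩ := Finset.mem_biUnion.1 hx
    exact Finset.mem_sup.2 ⟨I, hI, (Finset.mem_sdiff.1 hx).1⟩
  obtain ⟨x, hx, hxK⟩ := hK _ hmem
  obtain ⟨I, -, hx⟩ := Finset.mem_biUnion.1 hx
  exact (Finset.mem_sdiff.1 hx).2 hxK

lemma entails_of_forall_entails_singleton (hu : IsUpperRel r) (hc : CutTransitive r)
    {W F G : Finset S} (hW : ∀ f ∈ F, r W {f}) (hF : r F G) : r W G := by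
  refine hc.of_mem_downSet_polar ⟨{F}, by simpa [polar] using hF, fun H hH => ?_⟩
  obtain ⟨f, hf, hfH⟩ := hH F (Finset.mem_singleton_self F)
  exact hu W {f} H (hW f hf) (Finset.singleton_subset_iff.2 hfH)

lemma downSet_downSet_subset (hc : CutTransitive r)
    (X : Set (Finset S)) : downSet r (downSet r X) ⊆ downSet r X := by
  rintro F ⟨𝒢, h𝒢, hF⟩
  choose! 𝒢' h𝒢'X h𝒢' using fun I (hI : I ∈ 𝒢) => h𝒢 hI
  refine ⟨𝒢.biUnion 𝒢', by simpa using h𝒢'X, fun H hH => hc.of_mem_downSet_polar ⟨𝒢, ?_, hF⟩⟩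
  exact fun I hI => h𝒢' I hI H fun J hJ => hH J (Finset.mem_biUnion.2 ⟨I, hI, hJ⟩)

lemma quasiIdeal_downSet (hc : CutTransitive r) {X : Set (Finset S)}
    (hX : X ⊆ downSet r X) : QuasiIdeal r (downSet r X) :=
  (downSet_downSet_subset hc X).antisymm (downSet_mono hX)

lemma Divisible.mem_downSet_oneExists (hu : IsUpperRel r) (hd : Divisible r) {F G : Finset S}
    (hFG : r F G) : F ∈ downSet r {I | OneExists r I G} := by
  obtain ⟨ℱ, 𝒢, hℱ, hℱ𝒢, h𝒢⟩ := hd F G hFG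
  refine ⟨𝒢, h𝒢, fun H hH => ?_⟩
  by_cases hex : ∃ H' ∈ ℱ, H' ⊆ H
  · obtain ⟨H', hH', hH'H⟩ := hex
    exact hu F H' H (hℱ H' hH') hH'H
  push Not at hex
  obtain ⟨I, hI, hIK⟩ := hℱ𝒢 _ (isSelection_biUnion_sdiff hex)
  obtain ⟨x, hxI, hxH⟩ := hH I hI
  obtain ⟨H', -, hx⟩ := Finset.mem_biUnion.1 (hIK hxI)
  exact absurd hxH (Finset.mem_sdiff.1 hx).2

lemma polar_singleton_subset_downSet (hu : IsUpperRel r) (hd : Divisible r) (s : S) :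
    polar r {s} ⊆ downSet r (polar r {s}) := fun _ hF =>
  downSet_mono (by simp [OneExists, polar]) (hd.mem_downSet_oneExists hu hF)

lemma union_mem_downSet_union {X 𝒜 ℬ 𝒞 : Set (Finset S)} (hl : IsLowerRel r)
    (hX : IsUpperSet X) (h𝒞 : ∀ I ∈ 𝒜, ∀ J ∈ ℬ, I ∪ J ∈ 𝒞) {A B : Finset S}
    (hA : A ∈ downSet r (X ∪ 𝒜)) (hB : B ∈ downSet r (X ∪ ℬ)) :
    A ∪ B ∈ downSet r (X ∪ 𝒞) := by
  obtain ⟨𝒢, h𝒢, hA⟩ := hA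
  obtain ⟨ℋ, hℋ, hB⟩ := hB
  refine ⟨Finset.image₂ (· ∪ ·) 𝒢 ℋ, ?_, fun H hH => ?_⟩
  · intro K hK
    obtain ⟨I, hI, J, hJ, rfl⟩ := Finset.mem_image₂.1 hK
    rcases h𝒢 hI, hℋ hJ with ⟨hIX | hI𝒜, hJX | hJℬ⟩
    · exact .inl (hX Finset.subset_union_left hIX)
    · exact .inl (hX Finset.subset_union_left hIX)
    · exact .inl (hX Finset.subset_union_right hJX)
    · exact .inr (h𝒞 I hI𝒜 J hJℬ)
  by_cases hH𝒢 : IsSelection 𝒢 H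
  · exact hl A H _ (hA H hH𝒢) Finset.subset_union_left
  by_cases hHℋ : IsSelection ℋ H
  · exact hl B H _ (hB H hHℋ) Finset.subset_union_right
  -- a member of `𝒢` and one of `ℋ` both missing `H` give a member of `𝒢 ⊻ ℋ` missing `H`
  simp only [IsSelection, not_forall, not_exists, not_and] at hH𝒢 hHℋ
  obtain ⟨I, hI, hIH⟩ := hH𝒢
  obtain ⟨J, hJ, hJH⟩ := hHℋ
  obtain ⟨x, hx, hxH⟩ := hH _ (Finset.mem_image₂_of_mem hI hJ)
  rcases Finset.mem_union.1 hx with hx | hx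
  · exact (hIH x hx hxH).elim
  · exact (hJH x hx hxH).elim

lemma PrimeSet.not_subset_of_mem_downSet {T : Set S} (hT : PrimeSet r T)
    {X : Set (Finset S)} (hX : ∀ I ∈ X, ¬ ↑I ⊆ T) {A : Finset S} (hA : A ∈ downSet r X) :
    ¬ ↑A ⊆ T := by
  intro hAT
  obtain ⟨𝒢, h𝒢, hA⟩ := hA
  have hsel : IsSelection 𝒢 (𝒢.biUnion (·.filter (· ∉ T))) := by
    intro I hI
    obtain ⟨x, hxI, hxT⟩ := Set.not_subset.1 (hX I (h𝒢 hI))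
    exact ⟨x, hxI, Finset.mem_biUnion.2 ⟨I, hI, Finset.mem_filter.2 ⟨hxI, hxT⟩⟩⟩
  obtain ⟨x, hx, hxT⟩ := hT A _ hAT (hA _ hsel)
  obtain ⟨I, -, hx⟩ := Finset.mem_biUnion.1 hx
  exact (Finset.mem_filter.1 hx).2 hxT

lemma tightSet_of_primeSet_of_roundSet (hu : IsUpperRel r) {T : Set S} (hTp : PrimeSet r T)
    (hTr : RoundSet r T) : TightSet r T := by
  refine fun G => ⟨fun ⟨F, hFT, hFG⟩ => hTp F G hFT hFG, fun ⟨g, hgG, hgT⟩ => ?_⟩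
  obtain ⟨F, hFT, hFg⟩ := hTr g hgT
  exact ⟨F, hFT, hu F {g} G hFg (Finset.singleton_subset_iff.2 hgG)⟩

end DownSet

section MaximalQuasiIdeal

variable {S : Type*} {r : Finset S → Finset S → Prop} {R : Set S}

def AvoidingQuasiIdeal (r : Finset S → Finset S → Prop) (R : Set S) (𝒬 : Set (Finset S)) :
    Prop :=
  QuasiIdeal r 𝒬 ∧ ∀ A ∈ 𝒬, ¬ (↑A : Set S) ⊆ R

lemma avoidingQuasiIdeal_sUnion {c : Set (Set (Finset S))}
    (hc : ∀ 𝒬 ∈ c, AvoidingQuasiIdeal r R 𝒬) (hchain : IsChain (· ⊆ ·) c) (hne : c.Nonempty) :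
    AvoidingQuasiIdeal r R (⋃₀ c) := by
  refine ⟨subset_antisymm ?_ ?_, ?_⟩
  · rintro F ⟨𝒢, h𝒢, hF⟩
    obtain ⟨𝒬, h𝒬c, h𝒢𝒬⟩ :=
      hchain.directedOn.exists_mem_subset_of_finite_of_subset_sUnion hne 𝒢.finite_toSet h𝒢
    exact ⟨𝒬, h𝒬c, (hc 𝒬 h𝒬c).1.subset ⟨𝒢, h𝒢𝒬, hF⟩⟩
  · exact Set.sUnion_subset fun 𝒬 h𝒬c =>
      (hc 𝒬 h𝒬c).1.symm.subset.trans (downSet_mono (Set.subset_sUnion_of_mem h𝒬c))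
  · rintro A ⟨𝒬, h𝒬c, hA⟩
    exact (hc 𝒬 h𝒬c).2 A hA

lemma biUnion_polar_subset_downSet (hu : IsUpperRel r) (hd : Divisible r) (Q : Set S) :
    (⋃ q ∈ Q, polar r {q}) ⊆ downSet r (⋃ q ∈ Q, polar r {q}) :=
  Set.iUnion₂_subset fun q hq => (polar_singleton_subset_downSet hu hd q).trans
    (downSet_mono (Set.subset_biUnion_of_mem (u := fun q => polar r {q}) hq))

lemma avoidingQuasiIdeal_downSet_biUnion_polar (hu : IsUpperRel r) (hc : CutTransitive r)
    (hd : Divisible r) {Q : Set S} (h : ¬ ∃ F G : Finset S, ↑F ⊆ R ∧ ↑G ⊆ Q ∧ r F G) :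
    AvoidingQuasiIdeal r R (downSet r (⋃ q ∈ Q, polar r {q})) := by
  refine ⟨quasiIdeal_downSet hc (biUnion_polar_subset_downSet hu hd Q), ?_⟩
  rintro A ⟨𝒢, h𝒢, hA⟩ hAR
  choose q hqQ hq using fun I (hI : I ∈ 𝒢) => by
    simpa only [Set.mem_iUnion, exists_prop] using h𝒢 hI
  refine h ⟨A, 𝒢.attach.image fun I => q I.1 I.2, hAR, ?_, hc.of_mem_downSet_polar ⟨𝒢, ?_, hA⟩⟩
  · simpa [Set.range_subset_iff] using fun I hI => hqQ I hI
  · refine fun I hI => hu _ _ _ (hq I hI) ?_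
    simpa using ⟨I, hI, rfl⟩

lemma exists_maximal_avoidingQuasiIdeal (hu : IsUpperRel r) (hc : CutTransitive r)
    (hd : Divisible r) {Q : Set S} (h : ¬ ∃ F G : Finset S, ↑F ⊆ R ∧ ↑G ⊆ Q ∧ r F G) :
    ∃ 𝒬, (∀ q ∈ Q, polar r {q} ⊆ 𝒬) ∧ Maximal (AvoidingQuasiIdeal r R) 𝒬 := by
  obtain ⟨𝒬, h₀, hM⟩ := zorn_subset_nonempty {𝒬 | AvoidingQuasiIdeal r R 𝒬}
    (fun c hc hchain hne => ⟨⋃₀ c, avoidingQuasiIdeal_sUnion hc hchain hne,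
      fun _ => Set.subset_sUnion_of_mem⟩) _ (avoidingQuasiIdeal_downSet_biUnion_polar hu hc hd h)
  refine ⟨𝒬, fun q hq => ?_, hM⟩
  exact (Set.subset_biUnion_of_mem (u := fun q => polar r {q}) hq).trans
    ((biUnion_polar_subset_downSet hu hd Q).trans h₀)

def escapingPoints (r : Finset S → Finset S → Prop) (𝒬 : Set (Finset S)) : Set S :=
  {s | ¬ polar r {s} ⊆ 𝒬}

variable {𝒬 : Set (Finset S)}

lemma subset_escapingPoints (hR : RoundSet r R) (h𝒬R : ∀ A ∈ 𝒬, ¬ (↑A : Set S) ⊆ R) :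
    R ⊆ escapingPoints r 𝒬 := by
  intro s hs hs𝒬
  obtain ⟨W, hWR, hWs⟩ := hR s hs
  exact h𝒬R W (hs𝒬 hWs) hWR

lemma exists_mem_escapingPoints_of_entails (hu : IsUpperRel r) (hd : Divisible r)
    (h𝒬 : QuasiIdeal r 𝒬) {W G : Finset S} (hW : W ∉ 𝒬) (hWG : r W G) :
    ∃ g ∈ G, g ∈ escapingPoints r 𝒬 := by
  obtain ⟨𝒢, h𝒢, hW𝒢⟩ := hd.mem_downSet_oneExists hu hWG
  by_contra! hG
  refine hW (h𝒬.subset ⟨𝒢, fun I hI => ?_, hW𝒢⟩)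
  obtain ⟨g, hg, hIg⟩ := h𝒢 hI
  exact not_not.1 (hG g hg) hIg

lemma exists_subset_mem_downSet_union (hc : CutTransitive r)
    (hM : Maximal (AvoidingQuasiIdeal r R) 𝒬) {Y : Set (Finset S)} (hY : Y ⊆ downSet r Y)
    (hY𝒬 : ¬ Y ⊆ 𝒬) : ∃ A : Finset S, ↑A ⊆ R ∧ A ∈ downSet r (𝒬 ∪ Y) := by
  by_contra! hA
  have h𝒬 : 𝒬 ⊆ downSet r (𝒬 ∪ Y) :=
    hM.prop.1.symm.subset.trans (downSet_mono Set.subset_union_left)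
  have hY' : Y ⊆ downSet r (𝒬 ∪ Y) := hY.trans (downSet_mono Set.subset_union_right)
  have hP : AvoidingQuasiIdeal r R (downSet r (𝒬 ∪ Y)) :=
    ⟨quasiIdeal_downSet hc (Set.union_subset h𝒬 hY'), fun A hA' hAR => hA A hAR hA'⟩
  exact hY𝒬 (hY'.trans (hM.le_of_ge hP h𝒬))

lemma exists_subset_mem_downSet_union_forall_entails (hu : IsUpperRel r) (hl : IsLowerRel r)
    (hc : CutTransitive r) (hd : Divisible r) (hM : Maximal (AvoidingQuasiIdeal r R) 𝒬)
    {F : Finset S} (hF : ↑F ⊆ escapingPoints r 𝒬) :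
    ∃ A : Finset S, ↑A ⊆ R ∧ A ∈ downSet r (𝒬 ∪ {W | ∀ f ∈ F, r W {f}}) := by
  induction F using Finset.induction_on with
  | empty =>
    refine ⟨∅, by simp, {∅}, by simp, fun H hH => ?_⟩
    obtain ⟨x, hx, -⟩ := hH ∅ (Finset.mem_singleton_self ∅)
    exact absurd hx (Finset.notMem_empty x)
  | insert a F ha ih =>
    rw [Finset.coe_insert, Set.insert_subset_iff] at hF
    obtain ⟨A, hAR, hA⟩ := ih hF.2
    obtain ⟨B, hBR, hB⟩ :=
      exists_subset_mem_downSet_union hc hM (polar_singleton_subset_downSet hu hd a) hF.1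
    refine ⟨A ∪ B, by simp [hAR, hBR], union_mem_downSet_union hl
      (hM.prop.1 ▸ isUpperSet_downSet hl 𝒬) ?_ hA hB⟩
    intro I hI J hJ f hf
    rcases Finset.mem_insert.1 hf with rfl | hf
    · exact hl _ _ _ hJ Finset.subset_union_right
    · exact hl _ _ _ (hI f hf) Finset.subset_union_left

lemma exists_notMem_forall_entails (hu : IsUpperRel r) (hl : IsLowerRel r)
    (hc : CutTransitive r) (hd : Divisible r) (hM : Maximal (AvoidingQuasiIdeal r R) 𝒬)
    {F : Finset S} (hF : ↑F ⊆ escapingPoints r 𝒬) : ∃ W ∉ 𝒬, ∀ f ∈ F, r W {f} := by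
  obtain ⟨A, hAR, hA⟩ := exists_subset_mem_downSet_union_forall_entails hu hl hc hd hM hF
  by_contra hF𝒬
  have hsub : 𝒬 ∪ {W | ∀ f ∈ F, r W {f}} ⊆ 𝒬 :=
    Set.union_subset subset_rfl fun W hW => by_contra fun hW𝒬 => hF𝒬 ⟨W, hW𝒬, hW⟩
  exact hM.prop.2 A (hM.prop.1.subset (downSet_mono hsub hA)) hAR

lemma primeSet_escapingPoints (hu : IsUpperRel r) (hl : IsLowerRel r)
    (hc : CutTransitive r) (hd : Divisible r) (hM : Maximal (AvoidingQuasiIdeal r R) 𝒬) :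
    PrimeSet r (escapingPoints r 𝒬) := by
  intro F G hF hFG
  obtain ⟨W, hW𝒬, hW⟩ := exists_notMem_forall_entails hu hl hc hd hM hF
  exact exists_mem_escapingPoints_of_entails hu hd hM.prop.1 hW𝒬
    (entails_of_forall_entails_singleton hu hc hW hFG)

lemma not_subset_escapingPoints_of_mem (hu : IsUpperRel r) (hl : IsLowerRel r)
    (hc : CutTransitive r) (hd : Divisible r) (hM : Maximal (AvoidingQuasiIdeal r R) 𝒬)
    {I : Finset S} (hI : I ∈ 𝒬) : ¬ ↑I ⊆ escapingPoints r 𝒬 := by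
  intro hIT
  obtain ⟨W, hW𝒬, hW⟩ := exists_notMem_forall_entails hu hl hc hd hM hIT
  obtain ⟨𝒢, h𝒢, hI𝒢⟩ := hM.prop.1.symm.subset hI
  exact hW𝒬 (hM.prop.1.subset
    ⟨𝒢, h𝒢, fun H hH => entails_of_forall_entails_singleton hu hc hW (hI𝒢 H hH)⟩)

lemma roundSet_escapingPoints (hu : IsUpperRel r) (hl : IsLowerRel r)
    (hc : CutTransitive r) (hd : Divisible r) (hM : Maximal (AvoidingQuasiIdeal r R) 𝒬)
    (hR : RoundSet r R) : RoundSet r (escapingPoints r 𝒬) := by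
  intro g hg
  by_contra! hgT
  obtain ⟨A, hAR, hA⟩ :=
    exists_subset_mem_downSet_union hc hM (polar_singleton_subset_downSet hu hd g) hg
  refine (primeSet_escapingPoints hu hl hc hd hM).not_subset_of_mem_downSet ?_ hA
    (hAR.trans (subset_escapingPoints hR hM.prop.2))
  rintro I (hI | hI)
  · exact not_subset_escapingPoints_of_mem hu hl hc hd hM hI
  · exact fun hIT => hgT I hIT hI

end MaximalQuasiIdeal

/-- **Generalised Birkhoff–Stone prime filter theorem.** -/
theorem birkhoff_stone {S : Type*} (r : Finset S → Finset S → Prop)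
    (hr : StrongIdempotent r) (R Q : Set S) (hR : RoundSet r R)
    (h : ¬ ∃ F G : Finset S, ↑F ⊆ R ∧ ↑G ⊆ Q ∧ r F G) :
    ∃ T : Set S, TightSet r T ∧ R ⊆ T ∧ T ∩ Q = ∅ := by
  obtain ⟨hu, hl, hc, hd⟩ := hr
  obtain ⟨𝒬, hQ𝒬, hM⟩ := exists_maximal_avoidingQuasiIdeal hu hc hd h
  refine ⟨escapingPoints r 𝒬, tightSet_of_primeSet_of_roundSet hu
    (primeSet_escapingPoints hu hl hc hd hM) (roundSet_escapingPoints hu hl hc hd hM hR),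
    subset_escapingPoints hR hM.prop.2, ?_⟩
  exact Set.eq_empty_of_forall_notMem fun s ⟨hsT, hsQ⟩ => hsT (hQ𝒬 s hsQ)
end

section
/- Let S be a set, ⊢ a strong idempotent on 𝖥S, R ⊆ S round, and 𝒬 ⊆ 𝖥S. Suppose that for every finite F ⊆ R and every finite family 𝒢 ⊆ 𝒬 there exists G ∈ 𝒢_⋔ with F ⊬ G. Then there exists a tight subset T ⊆ S with R ⊆ T such that H ⊄ T (i.e. H is not a subset of T) for every H ∈ 𝒬. -/
open scoped Classical

/-!
By Zorn's lemma there is a maximal round set `T ⊇ R` no finite subset of which lies in `𝒬↓`.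
No `H ∈ 𝒬` lies inside `T`: by roundness a finite part of `T` entails each point of `H`, hence
every selection of `{H}`. Roundness also lets finite hypotheses from `T` be cut, and makes a
prime `T` tight.

Suppose `T` were not prime: `F ⊆ T`, `F ⊢ G` and `G ∩ T = ∅`. Dividing `F ⊢ G` again and again
gives a finitely branching tree of sets `H` with `F ⊢ H`. Along it we look for runs: sets of
points, level by level, starting in `G`, each point entailed by `T` together with the points of
the next level. For every depth there is a run whose points keep `T` out of `𝒬↓`: otherwise a
single selection `G₀` of the finitely many offending families would be entailed over `T` by the
points of every run, and cutting along the tree would give `T ⊢ G₀`, which is impossible.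
By Kőnig's lemma one run works at all depths; its points enlarge `T` to a round set still
avoiding `𝒬↓`, so by maximality they lie in `T`, yet some of them lie in `G`.
-/

section Relations

variable {S : Type*} {r : Finset S → Finset S → Prop} {T : Set S}

lemma exists_finset_subset_forall_of_mono {ι : Type*} {P : ι → Finset S → Prop}
    (hP : ∀ i A B, A ⊆ B → P i A → P i B) (s : Finset ι)
    (h : ∀ i ∈ s, ∃ A : Finset S, ↑A ⊆ T ∧ P i A) :
    ∃ A : Finset S, ↑A ⊆ T ∧ ∀ i ∈ s, P i A := by
  induction s using Finset.induction_on with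
  | empty => exact ⟨∅, by simp, by simp⟩
  | insert i s _ ih =>
    obtain ⟨A, hAT, hA⟩ := h i (Finset.mem_insert_self i s)
    obtain ⟨B, hBT, hB⟩ := ih fun j hj => h j (Finset.mem_insert_of_mem hj)
    refine ⟨A ∪ B, by simp [hAT, hBT], ?_⟩
    simp only [Finset.forall_mem_insert]
    exact ⟨hP i _ _ Finset.subset_union_left hA,
      fun j hj => hP j _ _ Finset.subset_union_right (hB j hj)⟩

lemma RoundSet.exists_forall_rel_singleton (hl : IsLowerRel r) (hT : RoundSet r T)
    {X : Finset S} (hX : ↑X ⊆ T) : ∃ A : Finset S, ↑A ⊆ T ∧ ∀ x ∈ X, r A {x} :=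
  exists_finset_subset_forall_of_mono (P := fun x A => r A {x})
    (fun _ _ _ hAB h => hl _ _ _ h hAB) X fun x hx => hT x (hX hx)

lemma RoundSet.sUnion {c : Set (Set S)} (hc : ∀ X ∈ c, RoundSet r X) : RoundSet r (⋃₀ c) := by
  rintro x ⟨X, hXc, hxX⟩
  obtain ⟨F, hFX, hF⟩ := hc X hXc x hxX
  exact ⟨F, hFX.trans (Set.subset_sUnion_of_mem hXc), hF⟩

lemma RoundSet.tightSet (hu : IsUpperRel r) (hT : RoundSet r T) (hP : PrimeSet r T) :
    TightSet r T := by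
  refine fun G => ⟨fun ⟨F, hFT, hF⟩ => hP F G hFT hF, fun ⟨g, hgG, hgT⟩ => ?_⟩
  obtain ⟨F, hFT, hF⟩ := hT g hgT
  exact ⟨F, hFT, hu _ _ _ hF (Finset.singleton_subset_iff.2 hgG)⟩

def EntailsOver (r : Finset S → Finset S → Prop) (T : Set S) (C G : Finset S) : Prop :=
  ∃ A : Finset S, ↑A ⊆ T ∧ r (A ∪ C) G

lemma entailsOver_of_subset (hl : IsLowerRel r) {I C G : Finset S} (hIC : I ⊆ C) (h : r I G) :
    EntailsOver r T C G :=
  ⟨∅, by simp, hl _ _ _ h (by simpa using hIC)⟩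

lemma cutTransitive_entailsOver (hl : IsLowerRel r) (hct : CutTransitive r)
    (hT : RoundSet r T) : CutTransitive (EntailsOver r T) := by
  rintro B G ⟨ℱ, 𝒢, hℱ, hsel, h𝒢⟩
  obtain ⟨A₁, hA₁T, hA₁⟩ := exists_finset_subset_forall_of_mono (P := fun H A => r (A ∪ B) H)
    (fun _ _ _ hAA' h => hl _ _ _ h (Finset.union_subset_union_left hAA')) ℱ hℱ
  obtain ⟨A₂, hA₂T, hA₂⟩ := exists_finset_subset_forall_of_mono (P := fun M A => r (A ∪ M) G)
    (fun _ _ _ hAA' h => hl _ _ _ h (Finset.union_subset_union_left hAA')) 𝒢 h𝒢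
  obtain ⟨A₃, hA₃T, hA₃⟩ := hT.exists_forall_rel_singleton hl hA₂T
  -- the hypotheses `A₂` are cut away through their supports `A₃`
  refine ⟨A₁ ∪ A₃, by simp [hA₁T, hA₃T], hct _ _ ⟨ℱ ∪ A₂.image singleton,
    𝒢.image (A₂ ∪ ·), ?_, fun K hK => ?_, ?_⟩⟩
  · simp only [Finset.mem_union, Finset.mem_image]
    rintro H (hH | ⟨t, ht, rfl⟩)
    · exact hl _ _ _ (hA₁ H hH) (Finset.union_subset_union_left Finset.subset_union_left)
    · exact hl _ _ _ (hA₃ t ht) (Finset.subset_union_right.trans Finset.subset_union_left)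
  · obtain ⟨M, hM, hMK⟩ := hsel K fun H hH => hK H (Finset.mem_union_left _ hH)
    refine ⟨A₂ ∪ M, Finset.mem_image_of_mem _ hM, Finset.union_subset (fun t ht => ?_) hMK⟩
    obtain ⟨x, hx, hxK⟩ := hK {t} (Finset.mem_union_right _ (Finset.mem_image_of_mem _ ht))
    rwa [Finset.mem_singleton.1 hx] at hxK
  · simp only [Finset.mem_image]
    rintro _ ⟨M, hM, rfl⟩
    exact hA₂ M hM

lemma EntailsOver.trans_singletons (hl : IsLowerRel r) (hct : CutTransitive r)
    (hT : RoundSet r T) {B X G : Finset S} (hX : ∀ x ∈ X, EntailsOver r T B {x})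
    (h : EntailsOver r T X G) : EntailsOver r T B G := by
  refine cutTransitive_entailsOver hl hct hT _ _ ⟨X.image singleton, {X}, ?_, fun K hK => ?_, ?_⟩
  · simp only [Finset.mem_image]
    rintro _ ⟨x, hx, rfl⟩
    exact hX x hx
  · refine ⟨X, Finset.mem_singleton_self X, fun x hx => ?_⟩
    obtain ⟨y, hy, hyK⟩ := hK {x} (Finset.mem_image_of_mem _ hx)
    rwa [Finset.mem_singleton.1 hy] at hyK
  · simpa using h

end Relations

section Avoidance

variable {S : Type*} {r : Finset S → Finset S → Prop} {𝒬 : Set (Finset S)} {T : Set S}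

def AvoidsDownSet (r : Finset S → Finset S → Prop) (𝒬 : Set (Finset S)) (X : Set S) : Prop :=
  ∀ F : Finset S, ↑F ⊆ X → F ∉ downSet r 𝒬

lemma AvoidsDownSet.mono {X Y : Set S} (hXY : X ⊆ Y) (h : AvoidsDownSet r 𝒬 Y) :
    AvoidsDownSet r 𝒬 X :=
  fun F hF => h F (hF.trans hXY)

lemma AvoidsDownSet.sUnion {c : Set (Set S)} (hc : IsChain (· ⊆ ·) c) (hne : c.Nonempty)
    (h : ∀ X ∈ c, AvoidsDownSet r 𝒬 X) : AvoidsDownSet r 𝒬 (⋃₀ c) := by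
  intro F hF
  obtain ⟨X, hXc, hFX⟩ :=
    hc.directedOn.exists_mem_subset_of_finite_of_subset_sUnion hne F.finite_toSet hF
  exact h X hXc F hFX

lemma exists_maximal_roundSet_avoidsDownSet {R : Set S} (hR : RoundSet r R)
    (hRQ : AvoidsDownSet r 𝒬 R) :
    ∃ T, R ⊆ T ∧ Maximal (fun X => RoundSet r X ∧ AvoidsDownSet r 𝒬 X) T := by
  refine zorn_subset_nonempty {X | RoundSet r X ∧ AvoidsDownSet r 𝒬 X}
    (fun c hc hchain hne => ⟨⋃₀ c, ⟨?_, ?_⟩, fun _ => Set.subset_sUnion_of_mem⟩) R ⟨hR, hRQ⟩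
  · exact RoundSet.sUnion fun X hX => (hc hX).1
  · exact AvoidsDownSet.sUnion hchain hne fun X hX => (hc hX).2

lemma AvoidsDownSet.not_subset (hu : IsUpperRel r) (hl : IsLowerRel r) (hT : RoundSet r T)
    (hA : AvoidsDownSet r 𝒬 T) {H : Finset S} (hH : H ∈ 𝒬) : ¬ ↑H ⊆ T := by
  intro hHT
  obtain ⟨A, hAT, hA'⟩ := hT.exists_forall_rel_singleton hl hHT
  refine hA A hAT ⟨{H}, by simpa using hH, fun K hK => ?_⟩
  obtain ⟨x, hxH, hxK⟩ := hK H (Finset.mem_singleton_self H)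
  exact hu _ _ _ (hA' x hxH) (Finset.singleton_subset_iff.2 hxK)

lemma AvoidsDownSet.exists_selection_forall_not_rel (hu : IsUpperRel r) (hl : IsLowerRel r)
    (hA : AvoidsDownSet r 𝒬 T) {𝒢 : Finset (Finset S)} (h𝒢 : ↑𝒢 ⊆ 𝒬) :
    ∃ G, IsSelection 𝒢 G ∧ ∀ A : Finset S, ↑A ⊆ T → ¬ r A G := by
  by_contra! hcon
  -- there are only finitely many selections inside `⋃ 𝒢`, and every selection contains one
  set U := 𝒢.biUnion id
  obtain ⟨A, hAT, hA'⟩ := exists_finset_subset_forall_of_mono (P := fun G A => r A G)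
    (fun _ _ _ hAB h => hl _ _ _ h hAB) (U.powerset.filter (IsSelection 𝒢))
    fun G hG => hcon G (Finset.mem_filter.1 hG).2
  refine hA A hAT ⟨𝒢, h𝒢, fun K hK => hu _ _ _ (hA' (K ∩ U) ?_) Finset.inter_subset_left⟩
  refine Finset.mem_filter.2 ⟨Finset.mem_powerset.2 Finset.inter_subset_right, fun I hI => ?_⟩
  obtain ⟨x, hxI, hxK⟩ := hK I hI
  exact ⟨x, hxI, Finset.mem_inter.2 ⟨hxK, Finset.mem_biUnion.2 ⟨I, hI, hxI⟩⟩⟩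

lemma exists_entailsOver_of_not_avoidsDownSet (hl : IsLowerRel r) {s : Finset S}
    (h : ¬ AvoidsDownSet r 𝒬 (T ∪ ↑s)) :
    ∃ 𝒢 : Finset (Finset S), ↑𝒢 ⊆ 𝒬 ∧ ∀ H, IsSelection 𝒢 H → EntailsOver r T s H := by
  simp only [AvoidsDownSet, not_forall, not_not] at h
  obtain ⟨F, hF, 𝒢, h𝒢, hall⟩ := h
  refine ⟨𝒢, h𝒢, fun H hH => ⟨F \ s, fun x hx => ?_, hl _ _ _ (hall H hH) ?_⟩⟩
  · rw [Finset.coe_sdiff] at hx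
    exact (hF hx.1).resolve_right hx.2
  · simp

lemma AvoidsDownSet.exists_forall_entailsOver (hu : IsUpperRel r) (hl : IsLowerRel r)
    (hA : AvoidsDownSet r 𝒬 T) (P : Finset (Finset S))
    (hP : ∀ s ∈ P, ¬ AvoidsDownSet r 𝒬 (T ∪ ↑s)) :
    ∃ G, (∀ A : Finset S, ↑A ⊆ T → ¬ r A G) ∧ ∀ s ∈ P, EntailsOver r T s G := by
  choose! 𝒢 h𝒢 h𝒢s using fun s hs => exists_entailsOver_of_not_avoidsDownSet hl (hP s hs)
  obtain ⟨G, hG, hGT⟩ := hA.exists_selection_forall_not_rel hu hl (𝒢 := P.biUnion 𝒢)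
    (by simpa using h𝒢)
  exact ⟨G, hGT, fun s hs => h𝒢s s hs G fun I hI => hG I (Finset.mem_biUnion.2 ⟨s, hs, hI⟩)⟩

end Avoidance

/-- Kőnig's lemma for properties of sequences that depend only on finite prefixes. -/
theorem exists_forall_of_forall_exists_of_local {β : Type*} (P : ℕ → (ℕ → β) → Prop)
    (B : ℕ → Finset β) (hB : ∀ n D, P n D → ∀ k ≤ n, D k ∈ B k)
    (hmono : ∀ m n D, m ≤ n → P n D → P m D)
    (hloc : ∀ n D D', (∀ k ≤ n, D k = D' k) → P n D → P n D')
    (h : ∀ n, ∃ D, P n D) : ∃ D, ∀ n, P n D := by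
  let α : ℕ → Type _ := fun n => {E : Fin (n + 1) → β // ∃ D, P n D ∧ ∀ k, E k = D k}
  have hfin (n : ℕ) : Finite (α n) := by
    refine Finite.of_injective (β := (k : Fin (n + 1)) → B k) (fun E k => ⟨E.1 k, ?_⟩) ?_
    · obtain ⟨D, hD, hE⟩ := E.2
      exact hE k ▸ hB n D hD k (Nat.lt_succ_iff.1 k.2)
    · intro E E' hEE'
      exact Subtype.ext (funext fun k => congrArg Subtype.val (congrFun hEE' k))
  have hne (n : ℕ) : Nonempty (α n) := by
    obtain ⟨D, hD⟩ := h n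
    exact ⟨⟨fun k => D k, D, hD, fun _ => rfl⟩⟩
  let π {i j : ℕ} (hij : i ≤ j) (E : α j) : α i :=
    ⟨fun k => E.1 (Fin.castLE (by omega) k), by
      obtain ⟨D, hD, hE⟩ := E.2
      exact ⟨D, hmono i j D hij hD, fun k => hE _⟩⟩
  obtain ⟨f, hf⟩ := exists_seq_forall_proj_of_forall_finite π (fun _ _ => rfl)
    (fun _ _ _ _ _ _ => rfl) fun _ _ => Set.toFinite _
  refine ⟨fun k => (f k).1 (Fin.last k), fun n => ?_⟩
  obtain ⟨D, hD, hfD⟩ := (f n).2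
  refine hloc n D _ (fun k hk => ?_) hD
  rw [← hf hk]
  exact (hfD ⟨k, Nat.lt_succ_of_le hk⟩).symm

section Division

variable {S : Type*} {r : Finset S → Finset S → Prop}

/-- A choice of the data `Fb ⊢ ch H`, `gate H ⊢_{1∃} H` exhibiting `Fb ⊢ H` in `⊢ • ⊢_{1∃}`,
for every `H` with `Fb ⊢ H`. -/
def IsDivision (r : Finset S → Finset S → Prop) (Fb : Finset S)
    (ch gate : Finset S → Finset (Finset S)) : Prop :=
  ∀ H, r Fb H → (∀ H' ∈ ch H, r Fb H') ∧ (∀ K, IsSelection (ch H) K → ∃ I ∈ gate H, I ⊆ K) ∧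
    ∀ I ∈ gate H, OneExists r I H

lemma Divisible.exists_isDivision (hdiv : Divisible r) (Fb : Finset S) :
    ∃ ch gate, IsDivision r Fb ch gate := by
  have (H : Finset S) : ∃ p : Finset (Finset S) × Finset (Finset S), r Fb H →
      (∀ H' ∈ p.1, r Fb H') ∧ (∀ K, IsSelection p.1 K → ∃ I ∈ p.2, I ⊆ K) ∧
        ∀ I ∈ p.2, OneExists r I H := by
    by_cases hH : r Fb H
    · obtain ⟨ℱ, 𝒢, h⟩ := hdiv Fb H hH
      exact ⟨(ℱ, 𝒢), fun _ => h⟩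
    · exact ⟨(∅, ∅), fun h => absurd h hH⟩
  choose p hp using this
  exact ⟨fun H => (p H).1, fun H => (p H).2, hp⟩

noncomputable def level (ch : Finset S → Finset (Finset S)) (G : Finset S) : ℕ → Finset (Finset S)
  | 0 => {G}
  | k + 1 => (level ch G k).biUnion ch

noncomputable def levelUnion (ch : Finset S → Finset (Finset S)) (G : Finset S) (k : ℕ) : Finset S :=
  (level ch G k).biUnion id

variable {𝒬 : Set (Finset S)} {T : Set S} {Fb G K : Finset S}
  {ch gate : Finset S → Finset (Finset S)}

lemma subset_levelUnion {k : ℕ} {H : Finset S} (hH : H ∈ level ch G k) :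
    H ⊆ levelUnion ch G k :=
  Finset.subset_biUnion_of_mem id hH

lemma rel_of_mem_level (hd : IsDivision r Fb ch gate) (hG : r Fb G) :
    ∀ {k : ℕ} {H : Finset S}, H ∈ level ch G k → r Fb H
  | 0, H, hH => by
    rw [level, Finset.mem_singleton] at hH
    exact hH ▸ hG
  | _ + 1, H, hH => by
    obtain ⟨H', hH', hH⟩ := Finset.mem_biUnion.1 hH
    exact (hd H' (rel_of_mem_level hd hG hH')).1 H hH

def IsRun (r : Finset S → Finset S → Prop) (T : Set S) (ch : Finset S → Finset (Finset S))
    (G : Finset S) (n : ℕ) (D : ℕ → Finset S) : Prop :=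
  (∀ k ≤ n, D k ⊆ levelUnion ch G k) ∧ (∃ g ∈ G, g ∈ D 0) ∧
    ∀ k < n, ∀ x ∈ D k, ∃ I : Finset S, ↑I ⊆ T ∪ ↑(D (k + 1)) ∧ r I {x}

def IsGoodRun (r : Finset S → Finset S → Prop) (𝒬 : Set (Finset S)) (T : Set S)
    (ch : Finset S → Finset (Finset S)) (G : Finset S) (n : ℕ) (D : ℕ → Finset S) : Prop :=
  IsRun r T ch G n D ∧ AvoidsDownSet r 𝒬 (T ∪ ↑((Finset.range n).biUnion D))

lemma IsGoodRun.mono {m n : ℕ} {D : ℕ → Finset S} (hmn : m ≤ n)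
    (h : IsGoodRun r 𝒬 T ch G n D) : IsGoodRun r 𝒬 T ch G m D := by
  obtain ⟨⟨hlev, hG, hent⟩, hA⟩ := h
  refine ⟨⟨fun k hk => hlev k (hk.trans hmn), hG, fun k hk => hent k (hk.trans_le hmn)⟩,
    hA.mono (Set.union_subset_union_right T ?_)⟩
  exact_mod_cast Finset.biUnion_subset_biUnion_of_subset_left D (Finset.range_subset_range.2 hmn)

lemma IsGoodRun.congr {n : ℕ} {D D' : ℕ → Finset S} (hDD' : ∀ k ≤ n, D k = D' k)
    (h : IsGoodRun r 𝒬 T ch G n D) : IsGoodRun r 𝒬 T ch G n D' := by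
  obtain ⟨⟨hlev, hG, hent⟩, hA⟩ := h
  refine ⟨⟨fun k hk => hDD' k hk ▸ hlev k hk, hDD' 0 (Nat.zero_le n) ▸ hG, fun k hk => ?_⟩, ?_⟩
  · rw [← hDD' k hk.le, ← hDD' (k + 1) hk]
    exact hent k hk
  · rwa [← Finset.biUnion_congr rfl fun k hk => hDD' k (Finset.mem_range.1 hk).le]

/-- Step `j` lies on level `n - j`, starting from `K` on level `n`. -/
noncomputable def ascent (r : Finset S → Finset S → Prop) (ch : Finset S → Finset (Finset S))
    (G : Finset S) (n : ℕ) (K : Finset S) : ℕ → Finset S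
  | 0 => K ∩ levelUnion ch G n
  | j + 1 => (levelUnion ch G (n - (j + 1))).filter
      fun x => ∃ I, I ⊆ ascent r ch G n K j ∧ r I {x}

lemma isSelection_ascent (hd : IsDivision r Fb ch gate) (hG : r Fb G) {n : ℕ}
    (hK : IsSelection (level ch G n) K) :
    ∀ j ≤ n, IsSelection (level ch G (n - j)) (ascent r ch G n K j)
  | 0, _ => fun H hH => by
    obtain ⟨x, hxH, hxK⟩ := hK H hH
    exact ⟨x, hxH, Finset.mem_inter.2 ⟨hxK, subset_levelUnion hH hxH⟩⟩
  | j + 1, hj => fun H hH => by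
    have hsel := isSelection_ascent hd hG hK j (by omega)
    rw [show n - j = n - (j + 1) + 1 by omega] at hsel
    have hH' := hd H (rel_of_mem_level hd hG hH)
    obtain ⟨I, hI, hIK⟩ := hH'.2.1 _ fun H' hH' => hsel H' (Finset.mem_biUnion.2 ⟨H, hH, hH'⟩)
    obtain ⟨g, hgH, hg⟩ := hH'.2.2 I hI
    exact ⟨g, hgH, Finset.mem_filter.2 ⟨subset_levelUnion hH hgH, I, hIK, hg⟩⟩

lemma entailsOver_ascent (hl : IsLowerRel r) (hct : CutTransitive r) (hT : RoundSet r T)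
    {n : ℕ} : ∀ j, ∀ x ∈ ascent r ch G n K (j + 1),
      EntailsOver r T (ascent r ch G n K 0) {x}
  | 0, x, hx => by
    obtain ⟨I, hI, hx⟩ := (Finset.mem_filter.1 hx).2
    exact entailsOver_of_subset hl hI hx
  | j + 1, x, hx => by
    obtain ⟨I, hI, hx⟩ := (Finset.mem_filter.1 hx).2
    exact EntailsOver.trans_singletons hl hct hT
      (fun y hy => entailsOver_ascent hl hct hT j y (hI hy))
      (entailsOver_of_subset hl Finset.Subset.rfl hx)

lemma isRun_ascent (hd : IsDivision r Fb ch gate) (hG : r Fb G) {n : ℕ}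
    (hK : IsSelection (level ch G n) K) :
    IsRun r T ch G n fun k => ascent r ch G n K (n - k) := by
  refine ⟨fun k hk => ?_, ?_, fun k hk x hx => ?_⟩
  · show ascent r ch G n K (n - k) ⊆ _
    rcases hk.lt_or_eq with hkn | rfl
    · rw [show n - k = n - (k + 1) + 1 by omega, ascent, show n - (n - (k + 1) + 1) = k by omega]
      exact Finset.filter_subset _ _
    · rw [Nat.sub_self, ascent]
      exact Finset.inter_subset_right
  · obtain ⟨g, hgG, hg⟩ := isSelection_ascent hd hG hK n le_rfl G (by simp [level])
    exact ⟨g, hgG, hg⟩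
  · simp only [show n - k = n - (k + 1) + 1 by omega, ascent, Finset.mem_filter] at hx
    obtain ⟨I, hI, hx⟩ := hx.2
    exact ⟨I, fun y hy => Or.inr (hI hy), hx⟩

end Division

section Prime

variable {S : Type*} {r : Finset S → Finset S → Prop} {𝒬 : Set (Finset S)} {T : Set S}
  {Fb G : Finset S} {ch gate : Finset S → Finset (Finset S)}

lemma exists_isGoodRun (hu : IsUpperRel r) (hl : IsLowerRel r) (hct : CutTransitive r)
    (hT : RoundSet r T) (hA : AvoidsDownSet r 𝒬 T) (hd : IsDivision r Fb ch gate)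
    (hFb : ↑Fb ⊆ T) (hG : r Fb G) (n : ℕ) : ∃ D, IsGoodRun r 𝒬 T ch G n D := by
  by_contra! hno
  -- one `G₀` is entailed by the points of every run of depth `n`, yet by no part of `T`
  obtain ⟨G₀, hG₀T, hG₀⟩ := hA.exists_forall_entailsOver hu hl
    (((Finset.range n).biUnion (levelUnion ch G)).powerset.filter
      fun s => ¬ AvoidsDownSet r 𝒬 (T ∪ ↑s)) fun s hs => (Finset.mem_filter.1 hs).2
  have hK (K : Finset S) (hK : IsSelection (level ch G n) K) :
      EntailsOver r T (ascent r ch G n K 0) G₀ := by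
    have hrun := isRun_ascent (T := T) hd hG hK
    refine EntailsOver.trans_singletons hl hct hT
      (X := (Finset.range n).biUnion fun k => ascent r ch G n K (n - k)) (fun x hx => ?_)
      (hG₀ _ ?_)
    · obtain ⟨k, hk, hxk⟩ := Finset.mem_biUnion.1 hx
      rw [show n - k = n - k - 1 + 1 by grind] at hxk
      exact entailsOver_ascent hl hct hT _ x hxk
    · refine Finset.mem_filter.2 ⟨Finset.mem_powerset.2 (Finset.biUnion_mono fun k hk =>
        hrun.1 k (Finset.mem_range.1 hk).le), fun hav => hno _ ⟨hrun, hav⟩⟩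
  obtain ⟨A, hAT, hA'⟩ := cutTransitive_entailsOver hl hct hT ∅ G₀
    ⟨level ch G n, (levelUnion ch G n).powerset.filter fun M => EntailsOver r T M G₀,
      fun H hH => ⟨Fb, hFb, by simpa using rel_of_mem_level hd hG hH⟩,
      fun K hK' => ⟨_, Finset.mem_filter.2 ⟨Finset.mem_powerset.2 Finset.inter_subset_right,
        hK K hK'⟩, Finset.inter_subset_left⟩,
      fun M hM => (Finset.mem_filter.1 hM).2⟩
  exact hG₀T A hAT (by simpa using hA')

lemma exists_forall_isGoodRun (hu : IsUpperRel r) (hl : IsLowerRel r) (hct : CutTransitive r)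
    (hT : RoundSet r T) (hA : AvoidsDownSet r 𝒬 T) (hd : IsDivision r Fb ch gate)
    (hFb : ↑Fb ⊆ T) (hG : r Fb G) : ∃ D, ∀ n, IsGoodRun r 𝒬 T ch G n D :=
  exists_forall_of_forall_exists_of_local _ (fun k => (levelUnion ch G k).powerset)
    (fun _ _ h k hk => Finset.mem_powerset.2 (h.1.1 k hk)) (fun _ _ _ hmn h => h.mono hmn)
    (fun _ _ _ hDD' h => h.congr hDD') (exists_isGoodRun hu hl hct hT hA hd hFb hG)

lemma primeSet_of_maximal (hu : IsUpperRel r) (hl : IsLowerRel r) (hct : CutTransitive r)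
    (hdiv : Divisible r) (hT : Maximal (fun X => RoundSet r X ∧ AvoidsDownSet r 𝒬 X) T) :
    PrimeSet r T := by
  intro Fb G hFb hG
  by_contra! hGT
  obtain ⟨ch, gate, hd⟩ := hdiv.exists_isDivision Fb
  obtain ⟨D, hD⟩ := exists_forall_isGoodRun hu hl hct hT.prop.1 hT.prop.2 hd hFb hG
  set X : ℕ → Set S := fun N => T ∪ ↑((Finset.range N).biUnion D)
  have hX : Monotone X := fun M N hMN => Set.union_subset_union_right T <| by
    exact_mod_cast Finset.biUnion_subset_biUnion_of_subset_left D (Finset.range_subset_range.2 hMN)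
  have hDX (k : ℕ) : ↑(D k) ⊆ X (k + 1) := fun x hx => Or.inr (by simpa using ⟨k, by omega, hx⟩)
  have hround : RoundSet r (⋃ N, X N) := by
    rintro x hx
    obtain ⟨N, hxT | hxD⟩ := Set.mem_iUnion.1 hx
    · obtain ⟨F, hFT, hF⟩ := hT.prop.1 x hxT
      exact ⟨F, hFT.trans (Set.subset_union_left.trans (Set.subset_iUnion X 0)), hF⟩
    · obtain ⟨k, -, hxk⟩ := by simpa using hxD
      obtain ⟨I, hI, hIx⟩ := (hD (k + 1)).1.2.2 k (Nat.lt_succ_self k) x hxk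
      have hT0 : T ⊆ X 0 := Set.subset_union_left
      exact ⟨I, hI.trans (Set.union_subset (hT0.trans (Set.subset_iUnion X 0))
        ((hDX (k + 1)).trans (Set.subset_iUnion X _))), hIx⟩
  have havoid : AvoidsDownSet r 𝒬 (⋃ N, X N) := fun F hF => by
    obtain ⟨N, hN⟩ := hX.directed_le.exists_mem_subset_of_finset_subset_biUnion hF
    exact (hD N).2 F hN
  have hXT : ⋃ N, X N ⊆ T :=
    (hT.eq_of_subset ⟨hround, havoid⟩ (Set.subset_union_left.trans (Set.subset_iUnion X 0))).ge
  obtain ⟨g, hgG, hg⟩ := (hD 0).1.2.1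
  exact hGT g hgG (hXT (Set.subset_iUnion X 1 (hDX 0 hg)))

end Prime

/-- **Birkhoff–Stone theorem for families of finite sets.** -/
theorem birkhoff_stone_families {S : Type*} (r : Finset S → Finset S → Prop)
    (hr : StrongIdempotent r) (R : Set S) (hR : RoundSet r R) (𝒬 : Set (Finset S))
    (h : ∀ F : Finset S, ↑F ⊆ R → ∀ 𝒢 : Finset (Finset S), ↑𝒢 ⊆ 𝒬 →
      ∃ G : Finset S, IsSelection 𝒢 G ∧ ¬ r F G) :
    ∃ T : Set S, TightSet r T ∧ R ⊆ T ∧ ∀ H ∈ 𝒬, ¬ (↑H ⊆ T) := by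
  obtain ⟨hu, hl, hct, hdiv⟩ := hr
  have hRQ : AvoidsDownSet r 𝒬 R := by
    rintro F hF ⟨𝒢, h𝒢, hall⟩
    obtain ⟨G, hG, hFG⟩ := h F hF 𝒢 h𝒢
    exact hFG (hall G hG)
  obtain ⟨T, hRT, hT⟩ := exists_maximal_roundSet_avoidsDownSet hR hRQ
  exact ⟨T, hT.prop.1.tightSet hu (primeSet_of_maximal hu hl hct hdiv hT), hRT,
    fun H hH => hT.prop.2.not_subset hu hl hT.prop.1 hH⟩
end

section
/- Let ⊢ be a strong idempotent on 𝖥S and let P ⊆ S be prime. Then the set 𝖥P^{⊢₁} = {p ∈ S : there is a finite F ⊆ P with F ⊢ {p}} is tight. -/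
open scoped Classical

/-! Divisibility writes `F ⊢ G` as a cut through sets `H` with `F ⊢ H`, followed by `I ⊢_{1∃} G`.
When `F ⊆ P`, primality makes each `H` meet `P`, so one of the `I` lies inside `P`, and `I ⊢ {g}`
puts some `g ∈ G` into `𝖥P^{⊢₁}`. Cut-transitivity reduces `F ⊢ G` with `F ⊆ 𝖥P^{⊢₁}` to this case,
and rerunning the argument with `𝖥P^{⊢₁}` in place of `P` shows that `𝖥P^{⊢₁}` is round, which
gives the converse. -/

/-- `𝖥P^{⊢₁}`. -/
def singleConsequences {S : Type*} (r : Finset S → Finset S → Prop) (P : Set S) : Set S :=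
  {p | ∃ F : Finset S, ↑F ⊆ P ∧ r F {p}}

section

variable {S : Type*} {r : Finset S → Finset S → Prop} {P : Set S}

theorem exists_isSelection_subset {ℱ : Finset (Finset S)} {A : Set S}
    (h : ∀ H ∈ ℱ, ∃ x ∈ H, x ∈ A) : ∃ K : Finset S, ↑K ⊆ A ∧ IsSelection ℱ K := by
  induction ℱ using Finset.induction_on with
  | empty => exact ⟨∅, by simp, by simp [IsSelection]⟩
  | insert H ℱ _ ih =>
    obtain ⟨K, hKA, hK⟩ := ih fun I hI => h I (Finset.mem_insert_of_mem hI)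
    obtain ⟨x, hxH, hxA⟩ := h H (Finset.mem_insert_self H ℱ)
    refine ⟨insert x K, by simpa [Set.insert_subset_iff] using ⟨hxA, hKA⟩, ?_⟩
    intro I hI
    rcases Finset.mem_insert.1 hI with rfl | hI
    · exact ⟨x, hxH, Finset.mem_insert_self x K⟩
    · obtain ⟨y, hyI, hyK⟩ := hK I hI
      exact ⟨y, hyI, Finset.mem_insert_of_mem hyK⟩

theorem Divisible.exists_singleton_of_forall_meets (hr : Divisible r) {A : Set S}
    {E G : Finset S} (hA : ∀ H, r E H → ∃ x ∈ H, x ∈ A) (hEG : r E G) :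
    ∃ g ∈ G, ∃ I : Finset S, ↑I ⊆ A ∧ r I {g} := by
  obtain ⟨ℱ, 𝒢, hℱ, hsel, h𝒢⟩ := hr E G hEG
  obtain ⟨K, hKA, hK⟩ := exists_isSelection_subset fun H hH => hA H (hℱ H hH)
  obtain ⟨I, hI, hIK⟩ := hsel K hK
  obtain ⟨g, hg, hIg⟩ := h𝒢 I hI
  exact ⟨g, hg, I, fun x hx => hKA (hIK hx), hIg⟩

theorem CutTransitive.vdash (hr : CutTransitive r) {F G : Finset S} (hFG : r F G) :
    Vdash r F G := by
  intro H hH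
  refine hr H G ⟨F.image ({·}), {F}, ?_, ?_, ?_⟩
  · simpa using hH
  · intro K hK
    refine ⟨F, Finset.mem_singleton_self F, fun f hf => ?_⟩
    obtain ⟨x, hx, hxK⟩ := hK {f} (Finset.mem_image_of_mem _ hf)
    rwa [Finset.mem_singleton.1 hx] at hxK
  · simpa using hFG

theorem IsLowerRel.exists_forall_of_subset_singleConsequences (hr : IsLowerRel r)
    {F : Finset S} (hF : ↑F ⊆ singleConsequences r P) :
    ∃ H : Finset S, ↑H ⊆ P ∧ ∀ f ∈ F, r H {f} := by
  induction F using Finset.induction_on with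
  | empty => exact ⟨∅, by simp, by simp⟩
  | insert a F _ ih =>
    rw [Finset.coe_insert, Set.insert_subset_iff] at hF
    obtain ⟨H, hHP, hH⟩ := ih hF.2
    obtain ⟨E, hEP, hEa⟩ := hF.1
    refine ⟨E ∪ H, by simpa using ⟨hEP, hHP⟩, ?_⟩
    intro f hf
    rcases Finset.mem_insert.1 hf with rfl | hf
    · exact hr _ _ _ hEa Finset.subset_union_left
    · exact hr _ _ _ (hH f hf) Finset.subset_union_right

theorem PrimeSet.exists_mem_singleConsequences (hP : PrimeSet r P) (hr : Divisible r)
    {F G : Finset S} (hF : ↑F ⊆ P) (hFG : r F G) :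
    ∃ g ∈ G, g ∈ singleConsequences r P :=
  hr.exists_singleton_of_forall_meets (fun H hH => hP F H hF hH) hFG

theorem PrimeSet.roundSet_singleConsequences (hP : PrimeSet r P) (hr : Divisible r) :
    RoundSet r (singleConsequences r P) := by
  rintro p ⟨E, hEP, hEp⟩
  obtain ⟨g, hg, hI⟩ := hr.exists_singleton_of_forall_meets
    (fun H hH => hP.exists_mem_singleConsequences hr hEP hH) hEp
  obtain rfl := Finset.mem_singleton.1 hg
  exact hI

end

/-- **Shrinking a prime subset to a tight one.** -/
theorem prime_to_tight {S : Type*} (r : Finset S → Finset S → Prop)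
    (hr : StrongIdempotent r) (P : Set S) (hP : PrimeSet r P) :
    TightSet r {p : S | ∃ F : Finset S, ↑F ⊆ P ∧ r F {p}} := by
  obtain ⟨hupper, hlower, htrans, hdiv⟩ := hr
  intro G
  constructor
  · rintro ⟨F, hFT, hFG⟩
    obtain ⟨H, hHP, hH⟩ := hlower.exists_forall_of_subset_singleConsequences hFT
    exact hP.exists_mem_singleConsequences hdiv hHP (htrans.vdash hFG H hH)
  · rintro ⟨g, hg, hgT⟩
    obtain ⟨I, hIT, hIg⟩ := hP.roundSet_singleConsequences hdiv g hgT
    exact ⟨I, hIT, hupper _ _ _ hIg (Finset.singleton_subset_iff.2 hg)⟩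
end

section
/- Every entailment ⊢ on 𝖥S is cut-transitive: ⊢ • ⊢ ⊆ ⊢. -/
open scoped Classical

/-! Induction on the family `ℱ`. To discharge a member `H ∈ ℱ`, apply Gentzen's cut once for
each element of `H`: from `F ⊢ H ∪ G` it remains to show `F ∪ {x} ⊢ G` for every `x ∈ H`, and this
is the same problem for the smaller family with `F ∪ {x}` in place of `F`, because adding `x` to a
selection of the smaller family gives a selection of `ℱ`. -/

section

variable {S : Type*} {r : Finset S → Finset S → Prop}

theorem IsSelection.insert {ℱ : Finset (Finset S)} {H K : Finset S} {x : S}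
    (hK : IsSelection ℱ K) (hx : x ∈ H) : IsSelection (insert H ℱ) (insert x K) := by
  intro I hI
  rcases Finset.mem_insert.mp hI with rfl | hI
  · exact ⟨x, hx, Finset.mem_insert_self x K⟩
  · obtain ⟨y, hyI, hyK⟩ := hK I hI
    exact ⟨y, hyI, Finset.mem_insert_of_mem hyK⟩

theorem CutRel.of_union_of_forall_insert (hc : CutRel r) (hu : IsUpperRel r)
    {F G H : Finset S} (hFGH : r F (G ∪ H)) (hH : ∀ x ∈ H, r (insert x F) G) : r F G := by
  induction H using Finset.induction_on with
  | empty => simpa using hFGH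
  | @insert a H _ ih =>
    refine ih ?_ fun x hx => hH x (Finset.mem_insert_of_mem hx)
    have hcut_left : r (insert a F) (G ∪ H) :=
      hu _ _ _ (hH a (Finset.mem_insert_self a H)) Finset.subset_union_left
    have hcut_right : r F (insert a (G ∪ H)) := by
      rwa [Finset.union_insert] at hFGH
    exact hc a F (G ∪ H) hcut_left hcut_right

theorem Entailment.of_forall_selection (h : Entailment r) {ℱ : Finset (Finset S)}
    {F G : Finset S} (hℱ : ∀ H ∈ ℱ, r F H)
    (hsel : ∀ K, IsSelection ℱ K → r (F ∪ K) G) : r F G := by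
  obtain ⟨hu, hl, hc⟩ := h
  induction ℱ using Finset.induction_on generalizing F with
  | empty => simpa using hsel ∅ fun I hI => absurd hI (Finset.notMem_empty I)
  | @insert H ℱ _ ih =>
    refine hc.of_union_of_forall_insert hu
      (hu _ _ _ (hℱ H (Finset.mem_insert_self H ℱ)) Finset.subset_union_right) fun x hx => ?_
    refine ih (fun H' hH' => hl _ _ _ (hℱ H' (Finset.mem_insert_of_mem hH'))
      (Finset.subset_insert x F)) fun K hK => ?_
    rw [Finset.insert_union, ← Finset.union_insert]
    exact hsel _ (hK.insert hx)

end

/-- **Entailments are always cut-transitive.** -/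
theorem entailment_cutTransitive {S : Type*} (r : Finset S → Finset S → Prop)
    (h : Entailment r) : CutTransitive r := by
  rintro F G ⟨ℱ, 𝒢, hℱ, h𝒢, hG⟩
  refine h.of_forall_selection hℱ fun K hK => ?_
  obtain ⟨I, hI, hIK⟩ := h𝒢 K hK
  have hl : IsLowerRel r := h.2.1
  exact hl _ _ _ (hG I hI) (hIK.trans Finset.subset_union_right)
end
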